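/- For every complex s with σ = Re s > 1, |Z₄(s)| ≤ ((σ−1/4)/(σ−1)²) · 2^{1−σ} · (3/2)^{1−2σ}. -/

import Mathlib

/-!
Both series are bounded termwise in absolute value. For `c > 0` and `p > 1` the integral test
bounds `∑_{n ≥ 1} (n + c)^{-p}` by `∫_c^∞ x^{-p} dx = c^{1-p}/(p-1)`. Applied to the inner series
with `c = 2k + 1 = 2(k + 1/2)` it makes the `k`-th term at most
`2^{1-σ}/(σ-1) · (k + 1/2)^{1-2σ}`, and applied once more (keeping the first term) to the outer
series it gives `∑_{k ≥ 1} (k + 1/2)^{1-2σ} ≤ (3/2)^{1-2σ} + (3/2)^{2-2σ}/(2σ-2)`.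
-/

open Complex

/-- `Z₄(s) = ∑_{k ≥ 1} (k+1/2)^{-s} ∑_{n ≥ 1} (2k+1+n)^{-s}`, with `k = m + 1`, `n = j + 1`. -/
noncomputable def Z₄ (s : ℂ) : ℂ :=
  ∑' m : ℕ, (1 / ((((m : ℂ) + 1) + 1 / 2) ^ s)) *
    ∑' j : ℕ, 1 / ((2 * ((m : ℂ) + 1) + 1 + ((j : ℂ) + 1)) ^ s)

open Set MeasureTheory

namespace Real
variable {c p : ℝ}

lemma antitoneOn_add_rpow_neg (hc : 0 < c) (hp : 0 ≤ p) :
    AntitoneOn (fun x : ℝ => (x + c) ^ (-p)) (Ici 0) := fun x hx _ _ hxy =>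
  rpow_le_rpow_of_nonpos (by linarith [mem_Ici.mp hx]) (by linarith) (by linarith)

lemma integrableOn_Ioi_add_rpow_neg (hc : 0 < c) (hp : 1 < p) :
    IntegrableOn (fun x : ℝ => (x + c) ^ (-p)) (Ioi 0) :=
  integrableOn_add_rpow_Ioi_of_lt (by linarith) (by linarith)

lemma integral_Ioi_add_rpow_neg (hc : 0 < c) (hp : 1 < p) :
    ∫ x in Ioi 0, (x + c) ^ (-p) = c ^ (1 - p) / (p - 1) := by
  have hshift := (measurePreserving_add_right volume c).setIntegral_preimage_emb
    (measurableEmbedding_addRight c) (fun x => x ^ (-p)) (Ioi c)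
  rw [preimage_add_const_Ioi, sub_self] at hshift
  rw [hshift, integral_Ioi_rpow_of_lt (by linarith) hc, neg_add_eq_sub, ← neg_sub p 1, div_neg,
    neg_div, neg_neg]

lemma add_rpow_neg_nonneg (hc : 0 < c) : ∀ x ∈ Ioi (0 : ℝ), 0 ≤ (x + c) ^ (-p) :=
  fun x hx => rpow_nonneg (by linarith [mem_Ioi.mp hx]) _

lemma summable_nat_add_rpow_neg (hc : 0 < c) (hp : 1 < p) :
    Summable fun n : ℕ => ((n : ℝ) + c) ^ (-p) :=
  (antitoneOn_add_rpow_neg hc (by linarith)).summable_of_integrableOn_Ioi_zero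
    (integrableOn_Ioi_add_rpow_neg hc hp) (add_rpow_neg_nonneg hc)

lemma tsum_nat_add_rpow_neg_le (hc : 0 < c) (hp : 1 < p) :
    ∑' n : ℕ, ((n : ℝ) + c) ^ (-p) ≤ c ^ (-p) + c ^ (1 - p) / (p - 1) := by
  simpa [integral_Ioi_add_rpow_neg hc hp] using
    (antitoneOn_add_rpow_neg hc (by linarith)).tsum_le_integral
      (integrableOn_Ioi_add_rpow_neg hc hp) (add_rpow_neg_nonneg hc)

lemma tsum_nat_succ_add_rpow_neg_le (hc : 0 < c) (hp : 1 < p) :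
    ∑' n : ℕ, (((n + 1 : ℕ) : ℝ) + c) ^ (-p) ≤ c ^ (1 - p) / (p - 1) := by
  simpa [integral_Ioi_add_rpow_neg hc hp] using
    (antitoneOn_add_rpow_neg hc (by linarith)).tsum_add_one_le_integral
      (integrableOn_Ioi_add_rpow_neg hc hp) (add_rpow_neg_nonneg hc)

end Real

lemma norm_one_div_ofReal_cpow {x : ℝ} (hx : 0 < x) (s : ℂ) :
    ‖1 / (x : ℂ) ^ s‖ = x ^ (-s.re) := by
  rw [norm_div, norm_one, norm_cpow_eq_rpow_re_of_pos hx, Real.rpow_neg hx.le, one_div]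

lemma norm_tsum_Z₄_inner_le {s : ℂ} (hs : 1 < s.re) (m : ℕ) :
    ‖∑' j : ℕ, 1 / ((2 * ((m : ℂ) + 1) + 1 + ((j : ℂ) + 1)) ^ s)‖ ≤
      (2 * (m : ℝ) + 3) ^ (1 - s.re) / (s.re - 1) := by
  have hc : (0 : ℝ) < 2 * m + 3 := by positivity
  have hnorm (j : ℕ) : ‖1 / ((2 * ((m : ℂ) + 1) + 1 + ((j : ℂ) + 1)) ^ s)‖ =
      (((j + 1 : ℕ) : ℝ) + (2 * m + 3)) ^ (-s.re) := by
    rw [← norm_one_div_ofReal_cpow (by positivity)]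
    push_cast
    ring_nf
  refine (tsum_of_norm_bounded ?_ (fun j => (hnorm j).le)).trans
    (Real.tsum_nat_succ_add_rpow_neg_le hc hs)
  exact ((summable_nat_add_iff 1).mpr (Real.summable_nat_add_rpow_neg hc hs)).hasSum

lemma norm_Z₄_term_le {s : ℂ} (hs : 1 < s.re) (m : ℕ) :
    ‖1 / ((((m : ℂ) + 1) + 1 / 2) ^ s) *
        ∑' j : ℕ, 1 / ((2 * ((m : ℂ) + 1) + 1 + ((j : ℂ) + 1)) ^ s)‖ ≤
      2 ^ (1 - s.re) / (s.re - 1) * ((m : ℝ) + 3 / 2) ^ (-(2 * s.re - 1)) := by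
  have hx : (0 : ℝ) < m + 3 / 2 := by positivity
  have houter : ((m : ℂ) + 1) + 1 / 2 = ((m + 3 / 2 : ℝ) : ℂ) := by push_cast; ring
  rw [norm_mul, houter, norm_one_div_ofReal_cpow hx]
  calc _ ≤ ((m : ℝ) + 3 / 2) ^ (-s.re) * ((2 * (m : ℝ) + 3) ^ (1 - s.re) / (s.re - 1)) := by
        gcongr; exact norm_tsum_Z₄_inner_le hs m
    _ = _ := by
      rw [show 2 * (m : ℝ) + 3 = 2 * (m + 3 / 2) by ring, Real.mul_rpow (by norm_num) hx.le,
        show -(2 * s.re - 1) = -s.re + (1 - s.re) by ring, Real.rpow_add hx]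
      ring

/-- For `Re s = σ > 1`, `|Z₄(s)| ≤ ((σ-1/4)/(σ-1)²) · 2^{1-σ} · (3/2)^{1-2σ}`. -/
theorem norm_Z₄_le (s : ℂ) (hs : 1 < s.re) :
    ‖Z₄ s‖ ≤ (s.re - 1 / 4) / (s.re - 1) ^ 2 * (2 : ℝ) ^ (1 - s.re) *
      (3 / 2 : ℝ) ^ (1 - 2 * s.re) := by
  set σ := s.re
  have hq : 1 < 2 * σ - 1 := by linarith
  have hsum := (Real.summable_nat_add_rpow_neg (c := 3 / 2) (by norm_num) hq).mul_left
    (2 ^ (1 - σ) / (σ - 1))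
  calc ‖Z₄ s‖ ≤ ∑' m : ℕ, 2 ^ (1 - σ) / (σ - 1) * ((m : ℝ) + 3 / 2) ^ (-(2 * σ - 1)) :=
        tsum_of_norm_bounded hsum.hasSum (norm_Z₄_term_le hs)
    _ ≤ 2 ^ (1 - σ) / (σ - 1) *
          ((3 / 2) ^ (-(2 * σ - 1)) + (3 / 2) ^ (1 - (2 * σ - 1)) / (2 * σ - 1 - 1)) := by
        rw [tsum_mul_left]
        gcongr
        exact Real.tsum_nat_add_rpow_neg_le (by norm_num) hq
    _ = _ := by
      rw [show -(2 * σ - 1) = 1 - 2 * σ by ring, show 1 - (2 * σ - 1) = 1 + (1 - 2 * σ) by ring,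
        Real.rpow_add (by norm_num), Real.rpow_one, show 2 * σ - 1 - 1 = 2 * (σ - 1) by ring]
      have : σ - 1 ≠ 0 := by linarith
      field_simp
      ring
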